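/- arXiv:1005.3516 — 4 statements merged into one kernel-verified Lean document; each statement's English description precedes it below -/
import Mathlib

section
/- Every finite subgroup of O(2,ℝ) is isomorphic, as an abstract group, either to a cyclic group of order n for some n ≥ 1, or to a dihedral group of order 2n for some n ≥ 1. -/
set_option maxHeartbeats 1000000

open Matrix

section helpers

private lemma o2_entries {A : Matrix (Fin 2) (Fin 2) ℝ} (h : star A * A = 1) :
    A 0 0 ^ 2 + A 1 0 ^ 2 = 1 ∧ A 0 0 * A 0 1 + A 1 0 * A 1 1 = 0 ∧
      A 0 1 ^ 2 + A 1 1 ^ 2 = 1 := by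
  have h00 := congrFun (congrFun h 0) 0
  have h01 := congrFun (congrFun h 0) 1
  have h11 := congrFun (congrFun h 1) 1
  simp [Matrix.mul_apply, Fin.sum_univ_two, Matrix.star_apply, Matrix.one_apply] at h00 h01 h11
  refine ⟨by nlinarith [h00], by nlinarith [h01], by nlinarith [h11]⟩

private lemma o2_det_one_struct {A : Matrix (Fin 2) (Fin 2) ℝ} (h : star A * A = 1)
    (hdet : A.det = 1) : A 1 1 = A 0 0 ∧ A 0 1 = -(A 1 0) := by
  obtain ⟨e1, e2, e3⟩ := o2_entries h
  rw [Matrix.det_fin_two] at hdet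
  constructor
  · linear_combination A 0 0 * hdet + A 1 0 * e2 - A 1 1 * e1
  · linear_combination A 1 1 * e2 - A 0 1 * hdet - A 1 0 * e3

private lemma o2_det_neg_one_sq {A : Matrix (Fin 2) (Fin 2) ℝ} (h : star A * A = 1)
    (hdet : A.det = -1) : A * A = 1 := by
  obtain ⟨e1, e2, e3⟩ := o2_entries h
  rw [Matrix.det_fin_two] at hdet
  have hd : A 1 1 = -(A 0 0) := by
    linear_combination A 0 0 * hdet + A 1 0 * e2 - A 1 1 * e1
  have hb : A 0 1 = A 1 0 := by
    linear_combination A 0 1 * hdet - A 1 1 * e2 + A 1 0 * e3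
  ext i j
  fin_cases i <;> fin_cases j <;>
    simp [Matrix.mul_apply, Fin.sum_univ_two, Matrix.one_apply, hd, hb] <;> nlinarith [e1]

private lemma isCyclic_of_o2_det_one {K : Type*} [Group K] [Finite K]
    (f : K →* Matrix (Fin 2) (Fin 2) ℝ) (horth : ∀ k, star (f k) * f k = 1)
    (hdet : ∀ k, (f k).det = 1) (hinj : Function.Injective f) : IsCyclic K := by
  let ψ : K →* ℂ :=
  { toFun := fun k => (f k 0 0 : ℂ) + (f k 1 0 : ℂ) * Complex.I
    map_one' := by
      show (f 1 0 0 : ℂ) + (f 1 1 0 : ℂ) * Complex.I = 1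
      rw [map_one f]
      simp [Matrix.one_apply]
    map_mul' := by
      intro a b
      obtain ⟨hd1, hb1⟩ := o2_det_one_struct (horth a) (hdet a)
      have hm := map_mul f a b
      have p00 : f (a * b) 0 0 = f a 0 0 * f b 0 0 + f a 0 1 * f b 1 0 := by
        rw [hm]; simp [Matrix.mul_apply, Fin.sum_univ_two]
      have p10 : f (a * b) 1 0 = f a 1 0 * f b 0 0 + f a 1 1 * f b 1 0 := by
        rw [hm]; simp [Matrix.mul_apply, Fin.sum_univ_two]
      simp only [p00, p10, hd1, hb1]
      push_cast
      ring_nf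
      rw [Complex.I_sq]
      ring }
  refine isCyclic_of_subgroup_isDomain ψ ?_
  intro a b hab
  apply hinj
  obtain ⟨ha1, ha2⟩ := o2_det_one_struct (horth a) (hdet a)
  obtain ⟨hb1, hb2⟩ := o2_det_one_struct (horth b) (hdet b)
  simp only [ψ, MonoidHom.coe_mk, OneHom.coe_mk, Complex.ext_iff, Complex.add_re,
    Complex.ofReal_re, Complex.mul_re, Complex.I_re, Complex.I_im, Complex.ofReal_im,
    Complex.add_im, Complex.mul_im] at hab
  obtain ⟨hre, him⟩ := hab
  ext i j
  fin_cases i <;> fin_cases j <;> simp_all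

private def dihMap {G : Type*} [Group G] {n : ℕ} (x g₀ : G) : DihedralGroup n → G
  | DihedralGroup.r i => x ^ i.val
  | DihedralGroup.sr i => g₀ * x ^ i.val

@[simp] private lemma dihMap_r {G : Type*} [Group G] {n : ℕ} (x g₀ : G) (i : ZMod n) :
    dihMap x g₀ (DihedralGroup.r i) = x ^ i.val := rfl

@[simp] private lemma dihMap_sr {G : Type*} [Group G] {n : ℕ} (x g₀ : G) (i : ZMod n) :
    dihMap x g₀ (DihedralGroup.sr i) = g₀ * x ^ i.val := rfl

end helpers

/-- Every finite subgroup of `O(2,ℝ)` is isomorphic, as an abstract group, to a cyclic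
group of order `n` (for some `n ≥ 1`) or to a dihedral group of order `2n` (for some `n ≥ 1`). -/
theorem finite_subgroup_O2_cyclic_or_dihedral
    (G : Subgroup (Matrix.orthogonalGroup (Fin 2) ℝ)) (hG : Finite G) :
    ∃ n : ℕ, 1 ≤ n ∧
      (Nonempty (G ≃* Multiplicative (ZMod n)) ∨ Nonempty (G ≃* DihedralGroup n)) := by
  classical
  let f : G →* Matrix (Fin 2) (Fin 2) ℝ :=
  { toFun := fun g => ((g : Matrix.orthogonalGroup (Fin 2) ℝ) : Matrix (Fin 2) (Fin 2) ℝ)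
    map_one' := rfl
    map_mul' := fun _ _ => rfl }
  have hinj : Function.Injective f := fun a b h => Subtype.ext (Subtype.ext h)
  have horth : ∀ g : G, star (f g) * f g = 1 := fun g =>
    (Unitary.mem_iff.mp (g : Matrix.orthogonalGroup (Fin 2) ℝ).2).1
  have hdet : ∀ g : G, (f g).det = 1 ∨ (f g).det = -1 := by
    intro g
    have h1 := congrArg Matrix.det (horth g)
    rw [Matrix.det_mul, Matrix.det_one, Matrix.star_eq_conjTranspose,
      Matrix.det_conjTranspose, star_trivial] at h1
    exact mul_self_eq_one_iff.mp h1
  by_cases hall : ∀ g : G, (f g).det = 1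
  · have hc : IsCyclic G := isCyclic_of_o2_det_one f horth hall hinj
    exact ⟨Nat.card G, Nat.card_pos, Or.inl ⟨(zmodCyclicMulEquiv hc).symm⟩⟩
  · push_neg at hall
    obtain ⟨g₀, hg₀⟩ := hall
    have hg₀det : (f g₀).det = -1 := (hdet g₀).resolve_left hg₀
    have hsq : ∀ g : G, (f g).det = -1 → g * g = 1 := by
      intro g hg
      apply hinj
      rw [_root_.map_mul, _root_.map_one]
      exact o2_det_neg_one_sq (horth g) hg
    have hg₀sq : g₀ * g₀ = 1 := hsq g₀ hg₀det
    have hconj : ∀ g : G, (f g).det = 1 → g₀ * g * g₀ = g⁻¹ := by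
      intro g hg
      have hd : (f (g₀ * g)).det = -1 := by
        rw [_root_.map_mul, Matrix.det_mul, hg₀det, hg]; ring
      have h1 : (g₀ * g * g₀) * g = 1 := by
        rw [mul_assoc (g₀ * g)]
        exact hsq _ hd
      exact eq_inv_of_mul_eq_one_left h1
    let H : Subgroup G :=
    { carrier := {g : G | (f g).det = 1}
      one_mem' := by
        show (f 1).det = 1
        rw [_root_.map_one, Matrix.det_one]
      mul_mem' := by
        intro a b ha hb
        show (f (a * b)).det = 1
        rw [_root_.map_mul, Matrix.det_mul]
        rw [show (f a).det = 1 from ha, show (f b).det = 1 from hb, mul_one]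
      inv_mem' := by
        intro a ha
        simp only [Set.mem_setOf_eq] at *
        have h2 : (f a⁻¹).det * (f a).det = 1 := by
          rw [← Matrix.det_mul, ← _root_.map_mul, inv_mul_cancel, _root_.map_one,
            Matrix.det_one]
        rwa [ha, mul_one] at h2 }
    haveI : Finite H := Subtype.finite
    haveI : Nonempty H := ⟨1⟩
    have hHcyc : IsCyclic H :=
      isCyclic_of_o2_det_one (f.comp H.subtype) (fun k => horth _) (fun k => k.2)
        (hinj.comp Subtype.val_injective)
    obtain ⟨h, hgen⟩ := hHcyc.exists_generator
    set n := Nat.card H with hn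
    haveI : NeZero n := ⟨Nat.card_pos.ne'⟩
    set x : G := (h : G) with hx
    have hxdet : (f x).det = 1 := h.2
    have hord : orderOf x = n := by
      rw [hx, Subgroup.orderOf_coe]
      haveI : Fintype H := Fintype.ofFinite H
      rw [orderOf_eq_card_of_forall_mem_zpowers hgen, hn, Nat.card_eq_fintype_card]
    have hπ : ∀ a b : ZMod n, x ^ (a + b).val = x ^ a.val * x ^ b.val := by
      intro a b
      rw [← pow_add, pow_eq_pow_iff_modEq, hord, ZMod.val_add]
      exact Nat.mod_modEq _ n
    have hπinj : ∀ a b : ZMod n, x ^ a.val = x ^ b.val → a = b := by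
      intro a b hab
      have hm := pow_eq_pow_iff_modEq.mp hab
      rw [hord] at hm
      have hv : a.val = b.val := by
        rwa [Nat.ModEq, Nat.mod_eq_of_lt (ZMod.val_lt a), Nat.mod_eq_of_lt (ZMod.val_lt b)] at hm
      exact ZMod.val_injective n hv
    have hcast : ∀ k : ℕ, x ^ ((k : ZMod n)).val = x ^ k := by
      intro k
      rw [pow_eq_pow_iff_modEq, hord, ZMod.val_natCast]
      exact Nat.mod_modEq k n
    have hpowdet : ∀ k : ℕ, (f (x ^ k)).det = 1 := by
      intro k
      rw [_root_.map_pow, Matrix.det_pow, hxdet, one_pow]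
    have hx_g₀ : ∀ k : ℕ, x ^ k * g₀ = g₀ * (x ^ k)⁻¹ := by
      intro k
      calc x ^ k * g₀ = g₀ * (g₀ * x ^ k * g₀) := by
            rw [← mul_assoc, ← mul_assoc, hg₀sq, one_mul]
        _ = g₀ * (x ^ k)⁻¹ := by rw [hconj _ (hpowdet k)]
    have hcomm : ∀ a b : ℕ, x ^ a * (x ^ b)⁻¹ = (x ^ b)⁻¹ * x ^ a := fun a b =>
      (((Commute.refl x).pow_pow a b).inv_right).eq
    have hsub : ∀ j i : ZMod n, x ^ (j - i).val = (x ^ i.val)⁻¹ * x ^ j.val := by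
      intro j i
      have e : x ^ (j - i).val * x ^ i.val = x ^ j.val := by
        rw [← hπ, sub_add_cancel]
      rw [eq_mul_inv_of_mul_eq e, hcomm]
    have hφmul : ∀ a b : DihedralGroup n,
        dihMap x g₀ (a * b) = dihMap x g₀ a * dihMap x g₀ b := by
      rintro (i | i) (j | j)
      · rw [DihedralGroup.r_mul_r, dihMap_r, dihMap_r, dihMap_r]
        exact hπ i j
      · rw [DihedralGroup.r_mul_sr, dihMap_sr, dihMap_r, dihMap_sr]
        calc g₀ * x ^ (j - i).val = g₀ * ((x ^ i.val)⁻¹ * x ^ j.val) := by rw [hsub]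
          _ = g₀ * (x ^ i.val)⁻¹ * x ^ j.val := by rw [mul_assoc]
          _ = x ^ i.val * g₀ * x ^ j.val := by rw [← hx_g₀]
          _ = x ^ i.val * (g₀ * x ^ j.val) := by rw [mul_assoc]
      · rw [DihedralGroup.sr_mul_r, dihMap_sr, dihMap_sr, dihMap_r]
        rw [hπ, mul_assoc]
      · rw [DihedralGroup.sr_mul_sr, dihMap_r, dihMap_sr, dihMap_sr]
        calc x ^ (j - i).val = (x ^ i.val)⁻¹ * x ^ j.val := hsub j i
          _ = (g₀ * g₀) * ((x ^ i.val)⁻¹ * x ^ j.val) := by rw [hg₀sq, one_mul]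
          _ = g₀ * (g₀ * (x ^ i.val)⁻¹) * x ^ j.val := by simp only [mul_assoc]
          _ = g₀ * (x ^ i.val * g₀) * x ^ j.val := by rw [← hx_g₀]
          _ = g₀ * x ^ i.val * (g₀ * x ^ j.val) := by simp only [mul_assoc]
    have hφinj : Function.Injective (dihMap x g₀ : DihedralGroup n → ↥G) := by
      rintro (i | i) (j | j) hab <;>
        simp only [dihMap_r, dihMap_sr] at hab
      · exact congrArg DihedralGroup.r (hπinj _ _ hab)
      · exfalso
        have h1 := hpowdet i.val
        rw [hab, _root_.map_mul, Matrix.det_mul, hg₀det, hpowdet j.val] at h1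
        norm_num at h1
      · exfalso
        have h1 := hpowdet j.val
        rw [← hab, _root_.map_mul, Matrix.det_mul, hg₀det, hpowdet i.val] at h1
        norm_num at h1
      · exact congrArg DihedralGroup.sr (hπinj _ _ (mul_left_cancel hab))
    have hφsurj : Function.Surjective (dihMap x g₀ : DihedralGroup n → ↥G) := by
      intro g
      have key : ∀ g' : ↥G, (f g').det = 1 → ∃ k : ℕ, x ^ k = g' := by
        intro g' hg'
        have hy : (⟨g', hg'⟩ : H) ∈ Submonoid.powers h :=
          mem_powers_iff_mem_zpowers.mpr (hgen _)
        obtain ⟨k, hk⟩ := (Submonoid.mem_powers_iff _ _).mp hy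
        exact ⟨k, by simpa using congrArg Subtype.val hk⟩
      rcases hdet g with hg1 | hg1
      · obtain ⟨k, hk⟩ := key g hg1
        exact ⟨DihedralGroup.r (k : ZMod n), by rw [dihMap_r, hcast k, hk]⟩
      · have hd1 : (f (g₀ * g)).det = 1 := by
          rw [_root_.map_mul, Matrix.det_mul, hg₀det, hg1]; ring
        obtain ⟨k, hk⟩ := key _ hd1
        refine ⟨DihedralGroup.sr (k : ZMod n), ?_⟩
        rw [dihMap_sr, hcast k, hk, ← mul_assoc, hg₀sq, one_mul]
    exact ⟨n, Nat.one_le_iff_ne_zero.mpr (NeZero.ne n),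
      Or.inr ⟨(MulEquiv.ofBijective (MonoidHom.mk' (dihMap x g₀) hφmul)
        ⟨hφinj, hφsurj⟩).symm⟩⟩
end

section
/- Let P, Q ∈ SL₂(ℝ) be parabolic elements (|tr| = 2 and not equal to ±I) that do not commute. Then the subgroup of SL₂(ℝ) generated by P and Q contains a hyperbolic element, i.e., an element W with |tr W| > 2. -/
private lemma sl2_entry_aux (a b c d e f g h ε δ : ℝ) (hε : ε ^ 2 = 1) (hδ : δ ^ 2 = 1)
    (hdP : a * d - b * c = 1) (hdQ : e * h - f * g = 1)
    (htP : a + d = 2 * ε) (htQ : e + h = 2 * δ)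
    (hT : a * e + b * g + c * f + d * h = 2 * (ε * δ)) :
    b * g = c * f ∧ a * f + b * h = e * b + f * d ∧ c * e + d * g = g * a + h * c := by
  have hd : d = 2 * ε - a := by linarith
  have hh : h = 2 * δ - e := by linarith
  subst hd hh
  have hs : (ε * a - 1) ^ 2 + b * c = 0 := by linear_combination a ^ 2 * hε - hdP
  have ht : (δ * e - 1) ^ 2 + f * g = 0 := by linear_combination e ^ 2 * hδ - hdQ
  have hc : 2 * (ε * a - 1) * (δ * e - 1) + ε * δ * (b * g + c * f) = 0 := by
    linear_combination ε * δ * hT + (-2 * δ ^ 2 + 2 * e * δ) * hε + (-2 + 2 * a * ε) * hδ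
  have h1 : (b * g - c * f) ^ 2 = 0 := by
    linear_combination (ε * δ * (b * g + c * f) - 2 * (ε * a - 1) * (δ * e - 1)) * hc
      + 4 * (δ * e - 1) ^ 2 * hs + (-4 * b * c) * ht
      + (-(c ^ 2 * f ^ 2 * δ ^ 2) - 2 * b * c * f * g * δ ^ 2 - b ^ 2 * g ^ 2 * δ ^ 2) * hε
      + (-(c ^ 2 * f ^ 2) - 2 * b * c * f * g - b ^ 2 * g ^ 2) * hδ
  have h2 : (a * f - e * b + δ * b - ε * f) ^ 2 = 0 := by
    linear_combination f ^ 2 * hs + b ^ 2 * ht + (-(ε * δ * b * f)) * hc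
      + (f ^ 2 + b * c * f ^ 2 * δ ^ 2 + b ^ 2 * f * g * δ ^ 2 - 2 * a * b * f * δ
          + 2 * a * b * e * f * δ ^ 2 - a ^ 2 * f ^ 2) * hε
      + (-2 * b * e * f * ε + b * c * f ^ 2 + b ^ 2 + b ^ 2 * f * g - b ^ 2 * e ^ 2
          + 2 * a * b * e * f) * hδ
  have h3 : (c * e - g * a + ε * g - δ * c) ^ 2 = 0 := by
    linear_combination g ^ 2 * hs + c ^ 2 * ht + (-(ε * δ * c * g)) * hc
      + (g ^ 2 + c ^ 2 * f * g * δ ^ 2 + b * c * g ^ 2 * δ ^ 2 - 2 * a * c * g * δ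
          + 2 * a * c * e * g * δ ^ 2 - a ^ 2 * g ^ 2) * hε
      + (-2 * c * e * g * ε + c ^ 2 + c ^ 2 * f * g - c ^ 2 * e ^ 2 + b * c * g ^ 2
          + 2 * a * c * e * g) * hδ
  have e1 : b * g - c * f = 0 := by
    have := sq_eq_zero_iff.mp h1; linarith [this]
  have e2 : a * f - e * b + δ * b - ε * f = 0 := sq_eq_zero_iff.mp h2
  have e3 : c * e - g * a + ε * g - δ * c = 0 := sq_eq_zero_iff.mp h3
  refine ⟨by linarith, by linear_combination 2 * e2, by linear_combination 2 * e3⟩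

/-- If `P, Q ∈ SL₂(ℝ)` are parabolic (`|tr| = 2`, not `±I`) and do not commute, then the
subgroup they generate contains a hyperbolic element (`|tr| > 2`). -/
theorem hyperbolic_of_noncommuting_parabolics
    (P Q : Matrix.SpecialLinearGroup (Fin 2) ℝ)
    (hPtr : |Matrix.trace (P : Matrix (Fin 2) (Fin 2) ℝ)| = 2)
    (hP1 : (P : Matrix (Fin 2) (Fin 2) ℝ) ≠ 1)
    (hP1' : (P : Matrix (Fin 2) (Fin 2) ℝ) ≠ -1)
    (hQtr : |Matrix.trace (Q : Matrix (Fin 2) (Fin 2) ℝ)| = 2)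
    (hQ1 : (Q : Matrix (Fin 2) (Fin 2) ℝ) ≠ 1)
    (hQ1' : (Q : Matrix (Fin 2) (Fin 2) ℝ) ≠ -1)
    (hcomm : P * Q ≠ Q * P) :
    ∃ W ∈ Subgroup.closure ({P, Q} : Set (Matrix.SpecialLinearGroup (Fin 2) ℝ)),
      2 < |Matrix.trace (W : Matrix (Fin 2) (Fin 2) ℝ)| := by
  set a := (P : Matrix (Fin 2) (Fin 2) ℝ) 0 0 with ha
  set b := (P : Matrix (Fin 2) (Fin 2) ℝ) 0 1 with hb
  set c := (P : Matrix (Fin 2) (Fin 2) ℝ) 1 0 with hcdef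
  set d := (P : Matrix (Fin 2) (Fin 2) ℝ) 1 1 with hd
  set e := (Q : Matrix (Fin 2) (Fin 2) ℝ) 0 0 with he
  set f := (Q : Matrix (Fin 2) (Fin 2) ℝ) 0 1 with hf
  set g := (Q : Matrix (Fin 2) (Fin 2) ℝ) 1 0 with hg
  set h := (Q : Matrix (Fin 2) (Fin 2) ℝ) 1 1 with hh
  have hPm : (P : Matrix (Fin 2) (Fin 2) ℝ) = !![a, b; c, d] := by
    rw [ha, hb, hcdef, hd]; exact (Matrix.eta_fin_two _)
  have hQm : (Q : Matrix (Fin 2) (Fin 2) ℝ) = !![e, f; g, h] := by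
    rw [he, hf, hg, hh]; exact (Matrix.eta_fin_two _)
  have hdP : a * d - b * c = 1 := by
    have := P.2; rwa [Matrix.det_fin_two] at this
  have hdQ : e * h - f * g = 1 := by
    have := Q.2; rwa [Matrix.det_fin_two] at this
  have htrP : |a + d| = 2 := by rwa [Matrix.trace_fin_two] at hPtr
  have htrQ : |e + h| = 2 := by rwa [Matrix.trace_fin_two] at hQtr
  obtain ⟨ε, hε1, htP⟩ : ∃ ε : ℝ, (ε = 1 ∨ ε = -1) ∧ a + d = 2 * ε := by
    rcases (abs_eq (by norm_num : (0:ℝ) ≤ 2)).mp htrP with h' | h'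
    · exact ⟨1, Or.inl rfl, by linarith⟩
    · exact ⟨-1, Or.inr rfl, by linarith⟩
  obtain ⟨δ, hδ1, htQ⟩ : ∃ δ : ℝ, (δ = 1 ∨ δ = -1) ∧ e + h = 2 * δ := by
    rcases (abs_eq (by norm_num : (0:ℝ) ≤ 2)).mp htrQ with h' | h'
    · exact ⟨1, Or.inl rfl, by linarith⟩
    · exact ⟨-1, Or.inr rfl, by linarith⟩
  have hε : ε ^ 2 = 1 := by rcases hε1 with rfl | rfl <;> norm_num
  have hδ : δ ^ 2 = 1 := by rcases hδ1 with rfl | rfl <;> norm_num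
  have hPcl : P ∈ Subgroup.closure ({P, Q} : Set (Matrix.SpecialLinearGroup (Fin 2) ℝ)) :=
    Subgroup.subset_closure (by simp)
  have hQcl : Q ∈ Subgroup.closure ({P, Q} : Set (Matrix.SpecialLinearGroup (Fin 2) ℝ)) :=
    Subgroup.subset_closure (by simp)
  have hT1 : Matrix.trace ((P * Q : Matrix.SpecialLinearGroup (Fin 2) ℝ) : Matrix (Fin 2) (Fin 2) ℝ)
      = a * e + b * g + c * f + d * h := by
    rw [Matrix.SpecialLinearGroup.coe_mul, hPm, hQm, Matrix.mul_fin_two,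
      Matrix.trace_fin_two_of]; ring
  have hQinv : ((Q⁻¹ : Matrix.SpecialLinearGroup (Fin 2) ℝ) : Matrix (Fin 2) (Fin 2) ℝ)
      = !![h, -f; -g, e] := by
    rw [Matrix.SpecialLinearGroup.coe_inv, hQm, Matrix.adjugate_fin_two]
    norm_num
  have hT2 : Matrix.trace ((P * Q⁻¹ : Matrix.SpecialLinearGroup (Fin 2) ℝ) : Matrix (Fin 2) (Fin 2) ℝ)
      = a * h - b * g - c * f + d * e := by
    rw [Matrix.SpecialLinearGroup.coe_mul, hPm, hQinv, Matrix.mul_fin_two,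
      Matrix.trace_fin_two_of]; ring
  by_cases hb1 : 2 < |Matrix.trace ((P * Q : Matrix.SpecialLinearGroup (Fin 2) ℝ) : Matrix (Fin 2) (Fin 2) ℝ)|
  · exact ⟨P * Q, mul_mem hPcl hQcl, hb1⟩
  by_cases hb2 : 2 < |Matrix.trace ((P * Q⁻¹ : Matrix.SpecialLinearGroup (Fin 2) ℝ) : Matrix (Fin 2) (Fin 2) ℝ)|
  · exact ⟨P * Q⁻¹, mul_mem hPcl (inv_mem hQcl), hb2⟩
  exfalso
  push_neg at hb1 hb2
  rw [hT1] at hb1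
  rw [hT2] at hb2
  obtain ⟨hb1l, hb1r⟩ := abs_le.mp hb1
  obtain ⟨hb2l, hb2r⟩ := abs_le.mp hb2
  have hsum : (a * e + b * g + c * f + d * h) + (a * h - b * g - c * f + d * e)
      = 4 * (ε * δ) := by linear_combination (e + h) * htP + 2 * ε * htQ
  have hT : a * e + b * g + c * f + d * h = 2 * (ε * δ) := by
    rcases hε1 with rfl | rfl <;> rcases hδ1 with rfl | rfl <;> norm_num at hsum ⊢ <;> linarith
  obtain ⟨k1, k2, k3⟩ := sl2_entry_aux a b c d e f g h ε δ hε hδ hdP hdQ htP htQ hT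
  apply hcomm
  apply Subtype.ext
  rw [Matrix.SpecialLinearGroup.coe_mul, Matrix.SpecialLinearGroup.coe_mul, hPm, hQm,
    Matrix.mul_fin_two, Matrix.mul_fin_two]
  ext i j
  fin_cases i <;> fin_cases j <;> simp <;> linarith
end

section
/- Let E ∈ SL₂(ℝ) be elliptic (|tr E| < 2) and let P ∈ SL₂(ℝ) be parabolic (|tr P| = 2) with P ≠ I and P ≠ −I. Then the conjugate Q = E P E⁻¹ does not commute with P. -/
private lemma detzero {A B C D x y : ℝ} (h1 : A*x + B*y = 0) (h2 : C*x + D*y = 0)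
    (hxy : ¬(x = 0 ∧ y = 0)) : A*D - B*C = 0 := by
  have hx : (A*D - B*C)*x = 0 := by linear_combination D*h1 - B*h2
  have hy : (A*D - B*C)*y = 0 := by linear_combination A*h2 - C*h1
  rcases mul_eq_zero.mp hx with h | h
  · exact h
  rcases mul_eq_zero.mp hy with h' | h'
  · exact h'
  exact absurd ⟨h, h'⟩ hxy

private lemma prop_lemma {p q r x0 x1 y0 y1 : ℝ}
    (hx1 : p*x0 + q*x1 = 0) (hx2 : r*x0 - p*x1 = 0)
    (hy1 : p*y0 + q*y1 = 0) (hy2 : r*y0 - p*y1 = 0)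
    (hN : ¬(p = 0 ∧ q = 0 ∧ r = 0)) (hx : ¬(x0 = 0 ∧ x1 = 0)) :
    ∃ μ : ℝ, y0 = μ*x0 ∧ y1 = μ*x1 := by
  have hp : p*(x0*y1 - x1*y0) = 0 := by linear_combination y1*hx1 - x1*hy1
  have hq : q*(x0*y1 - x1*y0) = 0 := by linear_combination x0*hy1 - y0*hx1
  have hr : r*(x0*y1 - x1*y0) = 0 := by linear_combination y1*hx2 - x1*hy2
  have hD : x0*y1 - x1*y0 = 0 := by
    by_contra hD0
    exact hN ⟨by rcases mul_eq_zero.mp hp with h | h; exacts [h, absurd h hD0],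
              by rcases mul_eq_zero.mp hq with h | h; exacts [h, absurd h hD0],
              by rcases mul_eq_zero.mp hr with h | h; exacts [h, absurd h hD0]⟩
  by_cases h0 : x0 = 0
  · have hx1ne : x1 ≠ 0 := fun h => hx ⟨h0, h⟩
    refine ⟨y1 / x1, ?_, (div_mul_cancel₀ _ hx1ne).symm⟩
    have : x1 * y0 = 0 := by linear_combination -hD + y1 * h0
    rw [h0, mul_zero]
    rcases mul_eq_zero.mp this with h | h
    · exact absurd h hx1ne
    · exact h
  · refine ⟨y0 / x0, (div_mul_cancel₀ _ h0).symm, ?_⟩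
    rw [div_mul_eq_mul_div, eq_div_iff h0]
    linear_combination hD

/-- If `E ∈ SL₂(ℝ)` is elliptic (`|tr E| < 2`) and `P ∈ SL₂(ℝ)` is parabolic
(`|tr P| = 2`, `P ≠ ±I`), then `Q = E P E⁻¹` does not commute with `P`. -/
theorem conjugate_parabolic_not_commuting
    (E P : Matrix.SpecialLinearGroup (Fin 2) ℝ)
    (hE : |Matrix.trace (E : Matrix (Fin 2) (Fin 2) ℝ)| < 2)
    (hPtr : |Matrix.trace (P : Matrix (Fin 2) (Fin 2) ℝ)| = 2)
    (hP1 : (P : Matrix (Fin 2) (Fin 2) ℝ) ≠ 1)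
    (hP1' : (P : Matrix (Fin 2) (Fin 2) ℝ) ≠ -1) :
    (E * P * E⁻¹) * P ≠ P * (E * P * E⁻¹) := by
  intro hcomm
  obtain ⟨a, b, c, d, hP⟩ : ∃ a b c d : ℝ, (P : Matrix (Fin 2) (Fin 2) ℝ) = !![a,b;c,d] :=
    ⟨_, _, _, _, Matrix.eta_fin_two _⟩
  obtain ⟨e, f, g, h, hEm⟩ : ∃ e f g h : ℝ, (E : Matrix (Fin 2) (Fin 2) ℝ) = !![e,f;g,h] :=
    ⟨_, _, _, _, Matrix.eta_fin_two _⟩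
  have hdP : a*d - b*c = 1 := by
    have := P.2; rw [hP, Matrix.det_fin_two_of] at this; exact this
  have hdE : e*h - f*g = 1 := by
    have := E.2; rw [hEm, Matrix.det_fin_two_of] at this; exact this
  rw [hP, Matrix.trace_fin_two_of] at hPtr
  rw [hEm, Matrix.trace_fin_two_of] at hE
  obtain ⟨s, hs2, had⟩ : ∃ s : ℝ, s^2 = 1 ∧ a + d = 2*s := by
    rcases (abs_eq (by norm_num : (0:ℝ) ≤ 2)).mp hPtr with ht | ht
    · exact ⟨1, by norm_num, by linarith⟩
    · exact ⟨-1, by norm_num, by linarith⟩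
  have hone : (1 : Matrix (Fin 2) (Fin 2) ℝ) = !![1,0;0,1] := by
    ext i j; fin_cases i <;> fin_cases j <;> simp
  -- the "nilpotent part" of P is nonzero
  have hN : ¬(a - s = 0 ∧ b = 0 ∧ c = 0) := by
    rintro ⟨h1, h2, h3⟩
    have hs' : (s - 1) * (s + 1) = 0 := by linear_combination hs2
    rcases mul_eq_zero.mp hs' with hs1 | hs1
    · exact hP1 (by rw [hP, show a = (1:ℝ) by linarith, h2, h3,
        show d = (1:ℝ) by linarith, hone])
    · refine hP1' ?_
      rw [hP, show a = (-1:ℝ) by linarith, h2, h3, show d = (-1:ℝ) by linarith]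
      ext i j; fin_cases i <;> fin_cases j <;> simp
  -- an eigenvector of P
  obtain ⟨v0, v1, hvne, he1, he2⟩ : ∃ v0 v1 : ℝ, ¬(v0 = 0 ∧ v1 = 0) ∧
      a*v0 + b*v1 = s*v0 ∧ c*v0 + d*v1 = s*v1 := by
    by_cases hb : b = 0 ∧ a - s = 0
    · refine ⟨a - s, c, fun hh => hN ⟨hb.2, hb.1, hh.2⟩, ?_, ?_⟩
      · linear_combination -hdP + a*had + hs2
      · linear_combination c*had
    · refine ⟨b, s - a, fun hh => hb ⟨hh.1, by linarith [hh.2]⟩, by ring, ?_⟩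
      linear_combination -hdP + s*had + hs2
  set v : Fin 2 → ℝ := ![v0, v1] with hvdef
  have hveig : (P : Matrix (Fin 2) (Fin 2) ℝ).mulVec v = s • v := by
    funext i
    fin_cases i <;>
      simp [hP, hvdef, Matrix.mulVec, dotProduct, Fin.sum_univ_two] <;>
      [exact he1; exact he2]
  set Ei : Matrix (Fin 2) (Fin 2) ℝ := ((E⁻¹ : Matrix.SpecialLinearGroup (Fin 2) ℝ) :
      Matrix (Fin 2) (Fin 2) ℝ) with hEidef
  have hIE : Ei * (E : Matrix (Fin 2) (Fin 2) ℝ) = 1 := by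
    rw [hEidef, ← Matrix.SpecialLinearGroup.coe_mul, inv_mul_cancel,
      Matrix.SpecialLinearGroup.coe_one]
  have hEI : (E : Matrix (Fin 2) (Fin 2) ℝ) * Ei = 1 := by
    rw [hEidef, ← Matrix.SpecialLinearGroup.coe_mul, mul_inv_cancel,
      Matrix.SpecialLinearGroup.coe_one]
  set X : Matrix (Fin 2) (Fin 2) ℝ :=
    (E : Matrix (Fin 2) (Fin 2) ℝ) * (P : Matrix (Fin 2) (Fin 2) ℝ) * Ei with hXdef
  have hXcoe : ((E * P * E⁻¹ : Matrix.SpecialLinearGroup (Fin 2) ℝ) :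
      Matrix (Fin 2) (Fin 2) ℝ) = X := by
    rw [hXdef, Matrix.SpecialLinearGroup.coe_mul, Matrix.SpecialLinearGroup.coe_mul]
  have hXP : X * (P : Matrix (Fin 2) (Fin 2) ℝ) = (P : Matrix (Fin 2) (Fin 2) ℝ) * X := by
    have := congrArg (fun g : Matrix.SpecialLinearGroup (Fin 2) ℝ =>
      (g : Matrix (Fin 2) (Fin 2) ℝ)) hcomm
    simpa only [Matrix.SpecialLinearGroup.coe_mul, hXcoe] using this
  set w : Fin 2 → ℝ := X.mulVec v with hwdef
  have hweig : (P : Matrix (Fin 2) (Fin 2) ℝ).mulVec w = s • w := by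
    rw [hwdef, Matrix.mulVec_mulVec, ← hXP, ← Matrix.mulVec_mulVec, hveig,
      Matrix.mulVec_smul]
  have hwne : ¬(w 0 = 0 ∧ w 1 = 0) := by
    rintro ⟨hw0, hw1⟩
    have hw : w = 0 := by funext i; fin_cases i <;> assumption
    have hYX : (((E * P * E⁻¹)⁻¹ : Matrix.SpecialLinearGroup (Fin 2) ℝ) :
        Matrix (Fin 2) (Fin 2) ℝ) * X = 1 := by
      rw [← hXcoe, ← Matrix.SpecialLinearGroup.coe_mul, inv_mul_cancel,
        Matrix.SpecialLinearGroup.coe_one]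
    have hv0 : v = 0 := by
      have : (((E * P * E⁻¹)⁻¹ : Matrix.SpecialLinearGroup (Fin 2) ℝ) :
          Matrix (Fin 2) (Fin 2) ℝ).mulVec w = v := by
        rw [hwdef, Matrix.mulVec_mulVec, hYX, Matrix.one_mulVec]
      rw [hw, Matrix.mulVec_zero] at this
      exact this.symm
    exact hvne ⟨by rw [← show v 0 = v0 by simp [hvdef], hv0]; rfl,
                by rw [← show v 1 = v1 by simp [hvdef], hv0]; rfl⟩
  -- scalar equations for w
  have hw1 : a * w 0 + b * w 1 = s * w 0 := by
    have := congrFun hweig 0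
    simpa [hP, Matrix.mulVec, dotProduct, Fin.sum_univ_two] using this
  have hw2 : c * w 0 + d * w 1 = s * w 1 := by
    have := congrFun hweig 1
    simpa [hP, Matrix.mulVec, dotProduct, Fin.sum_univ_two] using this
  -- w is proportional to v
  obtain ⟨μ, hμ0, hμ1⟩ : ∃ μ : ℝ, w 0 = μ*v0 ∧ w 1 = μ*v1 := by
    refine prop_lemma (p := a - s) (q := b) (r := c) ?_ ?_ ?_ ?_ hN hvne
    · linear_combination he1
    · linear_combination he2 - v1*had
    · linear_combination hw1
    · linear_combination hw2 - (w 1)*had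
  -- u = E⁻¹ v is an eigenvector of P with eigenvalue μ
  set u : Fin 2 → ℝ := Ei.mulVec v with hudef
  have hwv : w = μ • v := by
    funext i; fin_cases i <;> simp [hvdef] <;> assumption
  have hueig : (P : Matrix (Fin 2) (Fin 2) ℝ).mulVec u = μ • u := by
    have hPI : (P : Matrix (Fin 2) (Fin 2) ℝ) * Ei = Ei * X := by
      rw [hXdef]
      simp only [← Matrix.mul_assoc]
      rw [hIE, Matrix.one_mul]
    rw [hudef, Matrix.mulVec_mulVec, hPI, ← Matrix.mulVec_mulVec, ← hwdef, hwv,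
      Matrix.mulVec_smul]
  have hEu : (E : Matrix (Fin 2) (Fin 2) ℝ).mulVec u = v := by
    rw [hudef, Matrix.mulVec_mulVec, hEI, Matrix.one_mulVec]
  have hune : ¬(u 0 = 0 ∧ u 1 = 0) := by
    rintro ⟨hu0, hu1⟩
    have hu : u = 0 := by funext i; fin_cases i <;> assumption
    rw [hu, Matrix.mulVec_zero] at hEu
    exact hvne ⟨by rw [← show v 0 = v0 by simp [hvdef], ← hEu]; rfl,
                by rw [← show v 1 = v1 by simp [hvdef], ← hEu]; rfl⟩
  have hu1 : a * u 0 + b * u 1 = μ * u 0 := by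
    have := congrFun hueig 0
    simpa [hP, Matrix.mulVec, dotProduct, Fin.sum_univ_two] using this
  have hu2 : c * u 0 + d * u 1 = μ * u 1 := by
    have := congrFun hueig 1
    simpa [hP, Matrix.mulVec, dotProduct, Fin.sum_univ_two] using this
  -- μ = s since P has a double eigenvalue s
  have hdet : (a - μ)*(d - μ) - b*c = 0 :=
    detzero (by linear_combination hu1) (by linear_combination hu2) hune
  have hμs : μ = s := by
    have hsq : (μ - s)^2 = 0 := by linear_combination hdet - hdP + μ*had + hs2
    have := sq_eq_zero_iff.mp hsq
    linarith
  -- hence u is proportional to v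
  obtain ⟨ν, hν0, hν1⟩ : ∃ ν : ℝ, u 0 = ν*v0 ∧ u 1 = ν*v1 := by
    refine prop_lemma (p := a - s) (q := b) (r := c) ?_ ?_ ?_ ?_ hN hvne
    · linear_combination he1
    · linear_combination he2 - v1*had
    · linear_combination hu1 + (u 0)*hμs
    · linear_combination hu2 + (u 1)*hμs - (u 1)*had
  -- so v is an eigenvector of E
  have hEu0 : e * u 0 + f * u 1 = v0 := by
    have := congrFun hEu 0
    simpa [hEm, hvdef, Matrix.mulVec, dotProduct, Fin.sum_univ_two] using this
  have hEu1 : g * u 0 + h * u 1 = v1 := by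
    have := congrFun hEu 1
    simpa [hEm, hvdef, Matrix.mulVec, dotProduct, Fin.sum_univ_two] using this
  rw [hν0, hν1] at hEu0 hEu1
  have hdet2 : (ν*e - 1)*(ν*h - 1) - (ν*f)*(ν*g) = 0 :=
    detzero (by linear_combination hEu0) (by linear_combination hEu1) hvne
  have habs := abs_lt.mp hE
  have hquad : ν^2 - ν*(e+h) + 1 = 0 := by linear_combination hdet2 - ν^2*hdE
  nlinarith [sq_nonneg (2*ν - (e+h)), hquad,
    mul_pos (by linarith [habs.2] : (0:ℝ) < 2 - (e+h))
      (by linarith [habs.1] : (0:ℝ) < 2 + (e+h))]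
end

section
/- Let N ≥ 3 and let R ∈ O(2,ℝ) be the rotation by angle 2π/N. Let v = r(cos α, sin α) and w = s(cos β, sin β) with r, s > 0, and suppose that N(β − α)/π is not an integer. Set S_v = {Rᵏv : k} and S_w = {Rᵏw : k}. Then the joint stabilizer {A ∈ O(2,ℝ) : A·S_v = S_v and A·S_w = S_w} is exactly the cyclic group {Rᵏ : k = 0, …, N−1} of order N generated by R. -/
/-!
`R` is the rotation by the angle `θ = 2π/N`, which has order `N`, and `S_v`, `S_w` are the orbits
of `v`, `w` under `⟨R⟩`; hence `⟨R⟩` stabilizes both. Every element of `O(2)` is a rotation by some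
angle `γ` or acts on polar angles as the reflection `φ ↦ γ - φ`. A rotation preserving `S_v` moves
the angle of `v` by a multiple of `θ`, so it is a power of `R`. A reflection preserving both orbits
would give `γ - 2α, γ - 2β ∈ θℤ` modulo `2π`, hence `2(β - α) ∈ θℤ` modulo `2π`, and then
`N(β - α)/π` would be an integer.
-/

open Pointwise

noncomputable instance O2SMul : SMul (Matrix.orthogonalGroup (Fin 2) ℝ) (Fin 2 → ℝ) :=
  ⟨fun A v => (A : Matrix (Fin 2) (Fin 2) ℝ).mulVec v⟩

noncomputable instance O2MulAction : MulAction (Matrix.orthogonalGroup (Fin 2) ℝ) (Fin 2 → ℝ) where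
  one_smul v := Matrix.one_mulVec v
  mul_smul A B v := by
    show ((A * B : Matrix.orthogonalGroup (Fin 2) ℝ) : Matrix (Fin 2) (Fin 2) ℝ).mulVec v =
      (A : Matrix (Fin 2) (Fin 2) ℝ).mulVec ((B : Matrix (Fin 2) (Fin 2) ℝ).mulVec v)
    rw [Matrix.mulVec_mulVec]
    norm_cast

open Real Matrix MulAction Subgroup

namespace Real.Angle

theorem exists_cos_eq_and_sin_eq {a c : ℝ} (h : a ^ 2 + c ^ 2 = 1) :
    ∃ γ : Angle, cos γ = a ∧ sin γ = c := by
  have hnorm : ‖(⟨a, c⟩ : ℂ)‖ = 1 := by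
    rw [Complex.norm_def, Complex.normSq_apply, ← sq, ← sq, h, Real.sqrt_one]
  have hne : (⟨a, c⟩ : ℂ) ≠ 0 := norm_ne_zero_iff.mp (hnorm ▸ one_ne_zero)
  refine ⟨Complex.arg ⟨a, c⟩, ?_, ?_⟩
  · rw [cos_coe, Complex.cos_arg hne, hnorm, div_one]
  · rw [sin_coe, Complex.sin_arg, hnorm, div_one]

theorem ext_cos_sin {θ ψ : Angle} (hcos : cos θ = cos ψ) (hsin : sin θ = sin ψ) : θ = ψ := by
  induction θ using Real.Angle.induction_on
  induction ψ using Real.Angle.induction_on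
  exact cos_sin_inj hcos hsin

theorem addOrderOf_coe_two_pi_div {N : ℕ} (hN : 0 < N) :
    addOrderOf ((2 * π / N : ℝ) : Angle) = N :=
  haveI : Fact (0 < 2 * π) := ⟨two_pi_pos⟩
  AddCircle.addOrderOf_period_div hN

end Real.Angle

noncomputable def rotMatrix (θ : Real.Angle) : Matrix (Fin 2) (Fin 2) ℝ :=
  !![θ.cos, -θ.sin; θ.sin, θ.cos]

noncomputable def reflMatrix (θ : Real.Angle) : Matrix (Fin 2) (Fin 2) ℝ :=
  !![θ.cos, θ.sin; θ.sin, -θ.cos]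

noncomputable def polarVec (ρ : ℝ) (φ : Real.Angle) : Fin 2 → ℝ :=
  ![ρ * φ.cos, ρ * φ.sin]

theorem rotMatrix_zero : rotMatrix 0 = 1 := by
  simp [rotMatrix, Matrix.one_fin_two]

theorem rotMatrix_add (θ ψ : Real.Angle) : rotMatrix (θ + ψ) = rotMatrix θ * rotMatrix ψ := by
  simp only [rotMatrix, Matrix.mul_fin_two, Real.Angle.cos_add, Real.Angle.sin_add]
  ring_nf

theorem rotMatrix_mem_orthogonalGroup (θ : Real.Angle) :
    rotMatrix θ ∈ orthogonalGroup (Fin 2) ℝ := by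
  rw [mem_orthogonalGroup_iff]
  ext i j
  fin_cases i <;> fin_cases j <;> simp [rotMatrix, Matrix.mul_apply] <;>
    grind [Real.Angle.cos_sq_add_sin_sq]

theorem rotMatrix_injective : Function.Injective rotMatrix := fun θ ψ h ↦
  Real.Angle.ext_cos_sin (by simpa [rotMatrix] using congr_fun₂ h 0 0)
    (by simpa [rotMatrix] using congr_fun₂ h 1 0)

noncomputable def planeRotation : Multiplicative Real.Angle →* orthogonalGroup (Fin 2) ℝ where
  toFun θ := ⟨rotMatrix θ.toAdd, rotMatrix_mem_orthogonalGroup _⟩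
  map_one' := Subtype.ext rotMatrix_zero
  map_mul' _ _ := Subtype.ext (rotMatrix_add _ _)

@[simp]
theorem coe_planeRotation (θ : Multiplicative Real.Angle) :
    (planeRotation θ : Matrix (Fin 2) (Fin 2) ℝ) = rotMatrix θ.toAdd :=
  rfl

theorem planeRotation_injective : Function.Injective planeRotation := fun _ _ h ↦
  rotMatrix_injective (congrArg Subtype.val h)

theorem orderOf_planeRotation (θ : Real.Angle) :
    orderOf (planeRotation (.ofAdd θ)) = addOrderOf θ := by
  rw [orderOf_injective planeRotation planeRotation_injective, orderOf_ofAdd_eq_addOrderOf]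

theorem rotMatrix_mulVec_polarVec (θ : Real.Angle) (ρ : ℝ) (φ : Real.Angle) :
    rotMatrix θ *ᵥ polarVec ρ φ = polarVec ρ (φ + θ) := by
  ext i
  fin_cases i <;> simp [rotMatrix, polarVec, Real.Angle.cos_add, Real.Angle.sin_add] <;> ring

theorem reflMatrix_mulVec_polarVec (θ : Real.Angle) (ρ : ℝ) (φ : Real.Angle) :
    reflMatrix θ *ᵥ polarVec ρ φ = polarVec ρ (θ - φ) := by
  ext i
  fin_cases i <;> simp [reflMatrix, polarVec, sub_eq_add_neg, Real.Angle.cos_add,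
    Real.Angle.sin_add] <;> ring

theorem polarVec_injective {ρ : ℝ} (hρ : ρ ≠ 0) : Function.Injective (polarVec ρ) := fun _ _ h ↦
  Real.Angle.ext_cos_sin (mul_left_cancel₀ hρ (congr_fun h 0))
    (mul_left_cancel₀ hρ (congr_fun h 1))

theorem exists_eq_rotMatrix_or_eq_reflMatrix {A : Matrix (Fin 2) (Fin 2) ℝ}
    (hA : A ∈ orthogonalGroup (Fin 2) ℝ) : ∃ γ, A = rotMatrix γ ∨ A = reflMatrix γ := by
  rw [mem_orthogonalGroup_iff'] at hA
  have h00 : A 0 0 ^ 2 + A 1 0 ^ 2 = 1 := by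
    simpa [Matrix.mul_apply, sq] using congr_fun₂ hA 0 0
  have h01 : A 0 0 * A 0 1 + A 1 0 * A 1 1 = 0 := by
    simpa [Matrix.mul_apply] using congr_fun₂ hA 0 1
  have h11 : A 0 1 ^ 2 + A 1 1 ^ 2 = 1 := by
    simpa [Matrix.mul_apply, sq] using congr_fun₂ hA 1 1
  obtain ⟨γ, hcos, hsin⟩ := Real.Angle.exists_cos_eq_and_sin_eq h00
  -- `e = det A`; the second column is `e` times the first one turned by a right angle.
  set e := A 0 0 * A 1 1 - A 0 1 * A 1 0
  have hb : A 0 1 = -A 1 0 * e := by linear_combination A 0 0 * h01 - A 0 1 * h00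
  have hd : A 1 1 = A 0 0 * e := by linear_combination A 1 0 * h01 - A 1 1 * h00
  have he : e = 1 ∨ e = -1 := sq_eq_one_iff.mp <| by
    linear_combination (A 0 1 ^ 2 + A 1 1 ^ 2) * h00 + h11 - (A 0 0 * A 0 1 + A 1 0 * A 1 1) * h01
  refine ⟨γ, ?_⟩
  rw [eta_fin_two A, hb, hd, rotMatrix, reflMatrix, hcos, hsin]
  rcases he with he | he <;> simp [he]

theorem setOf_pow_smul_eq_orbit_zpowers {G α : Type*} [Group G] [MulAction G α] {g : G}
    (hg : IsOfFinOrder g) (a : α) :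
    {x | ∃ k < orderOf g, g ^ k • a = x} = orbit (zpowers g) a := by
  classical
  ext x
  simp only [Set.mem_ofPred_eq, mem_orbit_iff, Subtype.exists, Subgroup.mk_smul,
    hg.mem_zpowers_iff_mem_range_orderOf, Finset.mem_image, Finset.mem_range]
  grind

theorem Subgroup.le_stabilizer_orbit {G α : Type*} [Group G] [MulAction G α] (H : Subgroup G)
    (a : α) : H ≤ stabilizer G (orbit H a) := fun h hh ↦
  smul_orbit (⟨h, hh⟩ : H) a

theorem orthogonalGroup_smul_def (A : orthogonalGroup (Fin 2) ℝ) (u : Fin 2 → ℝ) :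
    A • u = (A : Matrix (Fin 2) (Fin 2) ℝ) *ᵥ u :=
  rfl

theorem planeRotation_zpow_smul_polarVec (θ : Real.Angle) (k : ℤ) (ρ : ℝ) (φ : Real.Angle) :
    planeRotation (.ofAdd θ) ^ k • polarVec ρ φ = polarVec ρ (φ + k • θ) := by
  rw [← map_zpow, ← ofAdd_zsmul, orthogonalGroup_smul_def, coe_planeRotation, toAdd_ofAdd,
    rotMatrix_mulVec_polarVec]

set_option synthInstance.maxHeartbeats 400000 in
theorem polarVec_mem_orbit_zpowers_planeRotation_iff {ρ : ℝ} (hρ : ρ ≠ 0) (θ φ ψ : Real.Angle) :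
    polarVec ρ ψ ∈ orbit (zpowers (planeRotation (.ofAdd θ))) (polarVec ρ φ) ↔
      ψ - φ ∈ AddSubgroup.zmultiples θ := by
  rw [AddSubgroup.mem_zmultiples_iff, mem_orbit_iff]
  constructor
  · rintro ⟨⟨_, hg⟩, hgφ⟩
    obtain ⟨k, rfl⟩ := mem_zpowers_iff.mp hg
    rw [Subgroup.mk_smul, planeRotation_zpow_smul_polarVec, (polarVec_injective hρ).eq_iff] at hgφ
    exact ⟨k, by rw [← hgφ, add_sub_cancel_left]⟩
  · rintro ⟨k, hk⟩
    refine ⟨⟨_, zpow_mem (mem_zpowers _) k⟩, ?_⟩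
    rw [Subgroup.mk_smul, planeRotation_zpow_smul_polarVec, hk, add_sub_cancel]

theorem exists_int_eq_div_pi_of_two_nsmul_mem_zmultiples {N : ℕ} (hN : 0 < N) {x : ℝ}
    (hx : (2 : ℕ) • (x : Real.Angle) ∈ AddSubgroup.zmultiples ((2 * π / N : ℝ) : Real.Angle)) :
    ∃ m : ℤ, N * x / π = m := by
  obtain ⟨k, hk⟩ := AddSubgroup.mem_zmultiples_iff.mp hx
  have hzero : ((2 * N * x : ℝ) : Real.Angle) = 0 := by
    have hNθ := addOrderOf_nsmul_eq_zero ((2 * π / N : ℝ) : Real.Angle)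
    rw [Real.Angle.addOrderOf_coe_two_pi_div hN] at hNθ
    rw [show 2 * N * x = N • (2 • x) by simp only [nsmul_eq_mul]; push_cast; ring,
      Real.Angle.coe_nsmul, Real.Angle.coe_nsmul, ← hk, smul_comm, hNθ, smul_zero]
  obtain ⟨m, hm⟩ := Real.Angle.coe_eq_zero_iff.mp hzero
  refine ⟨m, ?_⟩
  rw [div_eq_iff Real.pi_ne_zero]
  rw [zsmul_eq_mul] at hm
  linarith

set_option synthInstance.maxHeartbeats 400000 in
theorem mem_zpowers_of_smul_polarVec_mem_orbit {ρ : ℝ} (hρ : ρ ≠ 0) {θ φ γ : Real.Angle}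
    {A : orthogonalGroup (Fin 2) ℝ} (hA : (A : Matrix (Fin 2) (Fin 2) ℝ) = rotMatrix γ)
    (h : A • polarVec ρ φ ∈ orbit (zpowers (planeRotation (.ofAdd θ))) (polarVec ρ φ)) :
    A ∈ zpowers (planeRotation (.ofAdd θ)) := by
  rw [orthogonalGroup_smul_def, hA, rotMatrix_mulVec_polarVec,
    polarVec_mem_orbit_zpowers_planeRotation_iff hρ, add_sub_cancel_left] at h
  obtain ⟨k, hk⟩ := AddSubgroup.mem_zmultiples_iff.mp h
  refine mem_zpowers_iff.mpr ⟨k, Subtype.ext ?_⟩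
  rw [← map_zpow, ← ofAdd_zsmul, coe_planeRotation, toAdd_ofAdd, hk, hA]

set_option synthInstance.maxHeartbeats 400000 in
theorem two_nsmul_sub_mem_zmultiples_of_reflMatrix {ρ σ : ℝ} (hρ : ρ ≠ 0) (hσ : σ ≠ 0)
    {θ φ ψ γ : Real.Angle} {A : orthogonalGroup (Fin 2) ℝ}
    (hA : (A : Matrix (Fin 2) (Fin 2) ℝ) = reflMatrix γ)
    (hφ : A • polarVec ρ φ ∈ orbit (zpowers (planeRotation (.ofAdd θ))) (polarVec ρ φ))
    (hψ : A • polarVec σ ψ ∈ orbit (zpowers (planeRotation (.ofAdd θ))) (polarVec σ ψ)) :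
    (2 : ℕ) • (ψ - φ) ∈ AddSubgroup.zmultiples θ := by
  rw [orthogonalGroup_smul_def, hA, reflMatrix_mulVec_polarVec,
    polarVec_mem_orbit_zpowers_planeRotation_iff hρ] at hφ
  rw [orthogonalGroup_smul_def, hA, reflMatrix_mulVec_polarVec,
    polarVec_mem_orbit_zpowers_planeRotation_iff hσ] at hψ
  convert AddSubgroup.sub_mem _ hφ hψ using 1
  rw [two_nsmul]
  abel

set_option synthInstance.maxHeartbeats 400000 in
/-- For `N ≥ 3`, let `R ∈ O(2,ℝ)` be the rotation by `2π/N`, and let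
`v = r(cos α, sin α)`, `w = s(cos β, sin β)` with `r, s > 0` and `N(β - α)/π` not an
integer. Then the joint stabilizer in `O(2,ℝ)` of the rotation orbits
`S_v = {Rᵏv : k}` and `S_w = {Rᵏw : k}` is exactly the cyclic group generated by `R`,
which has order `N`. -/
theorem joint_stabilizer_two_ngons_cyclic
    (N : ℕ) (hN : 3 ≤ N)
    (R : Matrix.orthogonalGroup (Fin 2) ℝ)
    (hR : (R : Matrix (Fin 2) (Fin 2) ℝ) =
      !![Real.cos (2 * Real.pi / N), -Real.sin (2 * Real.pi / N);
         Real.sin (2 * Real.pi / N),  Real.cos (2 * Real.pi / N)])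
    (r s α β : ℝ) (hr : 0 < r) (hs : 0 < s)
    (v w : Fin 2 → ℝ)
    (hvdef : v = ![r * Real.cos α, r * Real.sin α])
    (hwdef : w = ![s * Real.cos β, s * Real.sin β])
    (hoff : ∀ m : ℤ, (N : ℝ) * (β - α) / Real.pi ≠ (m : ℝ))
    (Sv Sw : Set (Fin 2 → ℝ))
    (hSv : Sv = {x | ∃ k : ℕ, k < N ∧ (R ^ k) • v = x})
    (hSw : Sw = {x | ∃ k : ℕ, k < N ∧ (R ^ k) • w = x}) :
    MulAction.stabilizer (Matrix.orthogonalGroup (Fin 2) ℝ) Sv ⊓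
        MulAction.stabilizer (Matrix.orthogonalGroup (Fin 2) ℝ) Sw =
      Subgroup.zpowers R ∧
      Nat.card (Subgroup.zpowers R) = N := by
  have hRθ : R = planeRotation (.ofAdd ((2 * π / N : ℝ) : Real.Angle)) := Subtype.ext hR
  have horder : orderOf R = N := by
    rw [hRθ, orderOf_planeRotation, Real.Angle.addOrderOf_coe_two_pi_div (by omega)]
  have hfin : IsOfFinOrder R := orderOf_pos_iff.mp (by omega)
  rw [← horder, setOf_pow_smul_eq_orbit_zpowers hfin] at hSv hSw
  obtain rfl : v = polarVec r α := hvdef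
  obtain rfl : w = polarVec s β := hwdef
  subst hSv hSw hRθ
  refine ⟨le_antisymm ?_ (le_inf (le_stabilizer_orbit _ _) (le_stabilizer_orbit _ _)),
    by rw [Nat.card_zpowers, horder]⟩
  rintro A ⟨hAv, hAw⟩
  replace hAv := (mem_stabilizer_set.mp hAv _).mpr (mem_orbit_self _)
  replace hAw := (mem_stabilizer_set.mp hAw _).mpr (mem_orbit_self _)
  obtain ⟨γ, hγ | hγ⟩ := exists_eq_rotMatrix_or_eq_reflMatrix A.2
  · exact mem_zpowers_of_smul_polarVec_mem_orbit hr.ne' hγ hAv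
  · have h2 := two_nsmul_sub_mem_zmultiples_of_reflMatrix hr.ne' hs.ne' hγ hAv hAw
    rw [← Real.Angle.coe_sub] at h2
    obtain ⟨m, hm⟩ := exists_int_eq_div_pi_of_two_nsmul_mem_zmultiples (by omega) h2
    exact absurd hm (hoff m)
end
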